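/- For every definite Horn formula F and set of variables B, it holds BCN(B,F) = B ∪ RCN(B,F), where BCN(B,F) = {x | F ∪ B ⊨ x} and RCN(B,F) = {x | F ∪ (BCN(B,F) \ {x}) ⊨ x}. -/
import Mathlib


/-- A definite Horn clause: a finite body of variables implying a head variable. -/
structure Clause (V : Type) where
  body : Finset V
  head : V
deriving DecidableEq

variable {V : Type} [DecidableEq V]

/-- A model satisfies a clause when the head is true if the whole body is true. -/
def satClause (M : V → Prop) (c : Clause V) : Prop :=
  (∀ v ∈ c.body, M v) → M c.head

/-- A model satisfies a set of clauses when it satisfies each of them. -/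
def satSet (M : V → Prop) (S : Set (Clause V)) : Prop :=
  ∀ c ∈ S, satClause M c

/-- `EntV S A x`: the formula `S` together with the variables `A` entails variable `x`. -/
def EntV (S : Set (Clause V)) (A : Set V) (x : V) : Prop :=
  ∀ M : V → Prop, satSet M S → (∀ v ∈ A, M v) → M x

/-- `EntVS S A B`: `S ⊨ A → B`, i.e. `S` with `A` entails every variable of `B`. -/
def EntVS (S : Set (Clause V)) (A B : Set V) : Prop :=
  ∀ x ∈ B, EntV S A x

/-- `EntF S T`: `S` entails every clause of `T`. -/
def EntF (S T : Set (Clause V)) : Prop :=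
  ∀ c ∈ T, EntV S (↑c.body) c.head

/-- Logical equivalence of two sets of clauses: same models. -/
def EquivS (S T : Set (Clause V)) : Prop :=
  ∀ M : V → Prop, satSet M S ↔ satSet M T

/-- `BCN`: all variable consequences of `B` under the formula `S`. -/
def BCN (S : Set (Clause V)) (B : Set V) : Set V :=
  {x | EntV S B x}

/-- `RCN`: real consequences of `B` under `S`. -/
def RCN (S : Set (Clause V)) (B : Set V) : Set V :=
  {x | EntV S (BCN S B \ {x}) x}

/-- `F^x`: `F` without the clauses mentioning `x` in head or body. -/
def Fx (F : Finset (Clause V)) (x : V) : Finset (Clause V) :=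
  F.filter (fun c => x ∉ c.body ∧ c.head ≠ x)

/-- A formula is single-head when no two distinct clauses share the head. -/
def SingleHead (F : Finset (Clause V)) : Prop :=
  ∀ c ∈ F, ∀ d ∈ F, c.head = d.head → c = d

/-- `UCL(B,F)`: non-tautological clauses of `F` whose body is entailed by `B` according to `F`. -/
def UCL (B : Set V) (F : Finset (Clause V)) : Set (Clause V) :=
  {c | c ∈ F ∧ c.head ∉ c.body ∧ EntVS (↑F) B (↑c.body)}

/-- `UCL(B,G,F)`: clauses of `G` whose body is entailed by `B` according to `F`. -/
def UCL3 (B : Set V) (G F : Finset (Clause V)) : Set (Clause V) :=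
  {c | c ∈ G ∧ EntVS (↑F) B (↑c.body)}

/-- `SCL(B,F)`: clauses of strictly entailed bodies. -/
def SCL (B : Set V) (F : Finset (Clause V)) : Set (Clause V) :=
  {c | c.head ∉ c.body ∧ EntV (↑F) (↑c.body) c.head ∧
       EntVS (↑F) B (↑c.body) ∧ ¬ EntVS (↑F) (↑c.body) B}

/-- `BCL(B,F)`: clauses of equivalent bodies. -/
def BCL (B : Set V) (F : Finset (Clause V)) : Set (Clause V) :=
  {c | c.head ∉ c.body ∧ EntV (↑F) (↑c.body) c.head ∧
       EntVS (↑F) B (↑c.body) ∧ EntVS (↑F) (↑c.body) B}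

/-- `HCLOSE(H,S)`: body-minimal non-tautological entailed clauses with head in `H`. -/
def HCLOSE (H : Set V) (S : Set (Clause V)) : Set (Clause V) :=
  {c | EntV S (↑c.body) c.head ∧ c.head ∈ H ∧ c.head ∉ c.body ∧
       ∀ B'' : Finset V, B'' ⊂ c.body → ¬ EntV S (↑B'') c.head}

/-- One resolution step: resolve a clause of `S` into the body of `c`. -/
def Step (S : Set (Clause V)) (c d : Clause V) : Prop :=
  ∃ e ∈ S, e.head ∈ c.body ∧ d = ⟨(c.body \ {e.head}) ∪ e.body, c.head⟩

theorem stmt3 (F : Finset (Clause V)) (B : Set V) :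
    BCN (↑F) B = B ∪ RCN (↑F) B := by
  ext x
  constructor
  · intro hx
    by_cases hB : x ∈ B
    · exact Or.inl hB
    · refine Or.inr ?_
      intro M hS hA
      exact hx M hS (fun v hv => hA v ⟨fun M' hS' hA' => hA' v hv, fun h => hB (h ▸ hv)⟩)
  · rintro (hB | hR)
    · exact fun M _ hA => hA x hB
    · intro M hS hA
      exact hR M hS (fun v hv => hv.1 M hS hA)
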